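/- Let β ≠ 0 and p(ξ) = −βξ⁵ + αξ³. Suppose ξ, ξ₂ are real with |ξ| ∼ N (i.e., N/2 ≤ |ξ| ≤ 2N), |ξ₂| ∼ N, and |ξ − ξ₂| ≤ N_min where N_min ≪ N. Then there are constants C, N₀ depending only on α, β such that for N ≥ N₀, every τ ∈ ℝ, and every L > 0, the set {ξ₂ : |ξ₂| ∼ N, |ξ − ξ₂| ≤ N_min, |p(ξ₂) + p(ξ − ξ₂) − τ| ≤ L} has Lebesgue measure at most C·L·N^{−3}·N_min^{−1}. -/

import Mathlib

open MeasureTheory Set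

/-!
The phase `F(ξ₂) = p(ξ₂) + p(ξ - ξ₂)` has derivative `p'(ξ₂) - p'(ξ - ξ₂)`, where
`p'(x) = -5βx⁴ + 3αx²`. When `|ξ - ξ₂| ≤ N_min ≪ N ≲ |ξ|`, the quartic term dominates the
difference, so `|F'| ≳ |β| N⁴` on the whole interval `|ξ - ξ₂| ≤ N_min`. By the mean value
theorem the set where `F` lies within `L` of `τ` then has diameter `≲ L / (|β| N⁴)`, which is
at most `C L N⁻³ N_min⁻¹` because `N_min ≲ N`.
-/

section SublevelSet

variable {f f' : ℝ → ℝ} {s : Set ℝ} {m : ℝ}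

theorem mul_abs_sub_le_abs_sub_of_le_abs_deriv (hs : s.OrdConnected)
    (hf : ∀ x ∈ s, HasDerivAt f (f' x) x) (hm : ∀ x ∈ s, m ≤ |f' x|) {x y : ℝ}
    (hx : x ∈ s) (hy : y ∈ s) : m * |y - x| ≤ |f y - f x| := by
  wlog hxy : x < y generalizing x y
  · rcases (not_lt.1 hxy).eq_or_lt with rfl | hyx
    · simp
    · simpa only [abs_sub_comm] using this hy hx hyx
  have hIcc : Icc x y ⊆ s := hs.out hx hy
  obtain ⟨c, hc, hslope⟩ := exists_hasDerivAt_eq_slope f f' hxy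
    (fun z hz => (hf z (hIcc hz)).continuousAt.continuousWithinAt)
    (fun z hz => hf z (hIcc (Ioo_subset_Icc_self hz)))
  have hmc := hm c (hIcc (Ioo_subset_Icc_self hc))
  rwa [hslope, abs_div, abs_of_pos (sub_pos.2 hxy), le_div_iff₀ (sub_pos.2 hxy),
    ← abs_of_pos (sub_pos.2 hxy)] at hmc

theorem volume_setOf_abs_sub_le_le_of_le_abs_deriv (hs : s.OrdConnected)
    (hf : ∀ x ∈ s, HasDerivAt f (f' x) x) (hm : ∀ x ∈ s, m ≤ |f' x|) (hm₀ : 0 < m)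
    (τ L : ℝ) : volume {x ∈ s | |f x - τ| ≤ L} ≤ ENNReal.ofReal (2 * L / m) := by
  refine (Real.volume_le_diam _).trans (Metric.ediam_le_of_forall_dist_le fun x hx y hy => ?_)
  rw [Real.dist_eq, le_div_iff₀' hm₀]
  calc m * |x - y| ≤ |f x - f y| :=
        mul_abs_sub_le_abs_sub_of_le_abs_deriv hs hf hm hy.1 hx.1
    _ = |(f x - τ) - (f y - τ)| := by ring_nf
    _ ≤ |f x - τ| + |f y - τ| := abs_sub _ _
    _ ≤ 2 * L := by linarith [hx.2, hy.2]

end SublevelSet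

section Kawahara

def kawaharaSymbol (α β ξ : ℝ) : ℝ := -β * ξ ^ 5 + α * ξ ^ 3

def kawaharaSymbolDeriv (α β ξ : ℝ) : ℝ := -5 * β * ξ ^ 4 + 3 * α * ξ ^ 2

variable {α β : ℝ}

theorem hasDerivAt_kawaharaSymbol (x : ℝ) :
    HasDerivAt (kawaharaSymbol α β) (kawaharaSymbolDeriv α β x) x := by
  have h := ((hasDerivAt_pow 5 x).const_mul (-β)).add ((hasDerivAt_pow 3 x).const_mul α)
  exact h.congr_deriv (by simp only [kawaharaSymbolDeriv]; push_cast; ring)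

theorem hasDerivAt_kawaharaSymbol_add_sub (ξ x : ℝ) :
    HasDerivAt (fun y => kawaharaSymbol α β y + kawaharaSymbol α β (ξ - y))
      (kawaharaSymbolDeriv α β x - kawaharaSymbolDeriv α β (ξ - x)) x := by
  have h := (hasDerivAt_kawaharaSymbol (α := α) (β := β) (ξ - x)).comp x
    ((hasDerivAt_id x).const_sub ξ)
  exact ((hasDerivAt_kawaharaSymbol x).add h).congr_deriv (by ring)

theorem abs_mul_pow_four_le_abs_kawaharaSymbolDeriv_sub {x η : ℝ} (hη : 2 * |η| ≤ |x|)
    (hα : |α| ≤ |β| * x ^ 2) :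
    |β| * x ^ 4 ≤ |kawaharaSymbolDeriv α β x - kawaharaSymbolDeriv α β η| := by
  have h2 : 4 * η ^ 2 ≤ x ^ 2 := by
    nlinarith [pow_le_pow_left₀ (by positivity) hη 2, sq_abs η, sq_abs x]
  have h4 : 16 * η ^ 4 ≤ x ^ 4 := by nlinarith
  have hβ := abs_nonneg β
  calc |β| * x ^ 4 ≤ 5 * |β| * (x ^ 4 - η ^ 4) - 3 * |α| * (x ^ 2 - η ^ 2) := by
        nlinarith [mul_le_mul_of_nonneg_right hα (sq_nonneg x),
          mul_nonneg (abs_nonneg α) (sq_nonneg η), mul_le_mul_of_nonneg_left h4 hβ,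
          mul_nonneg hβ (pow_nonneg (sq_nonneg x) 2)]
    _ = |-5 * β * (x ^ 4 - η ^ 4)| - |3 * α * (x ^ 2 - η ^ 2)| := by
        rw [abs_mul, abs_mul, abs_mul, abs_mul, abs_of_nonneg (by nlinarith : 0 ≤ x ^ 4 - η ^ 4),
          abs_of_nonneg (by nlinarith : 0 ≤ x ^ 2 - η ^ 2)]
        norm_num
    _ ≤ |-5 * β * (x ^ 4 - η ^ 4) + 3 * α * (x ^ 2 - η ^ 2)| := abs_sub_abs_le_abs_add _ _
    _ = |kawaharaSymbolDeriv α β x - kawaharaSymbolDeriv α β η| := by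
        simp only [kawaharaSymbolDeriv]; ring_nf

theorem abs_mul_pow_four_div_le_abs_kawaharaSymbolDeriv_sub {N ξ x : ℝ}
    (hα : 16 * |α| ≤ |β| * N ^ 2) (hξ : N / 2 ≤ |ξ|) (hx : 8 * |ξ - x| ≤ N) :
    |β| * N ^ 4 / 256 ≤ |kawaharaSymbolDeriv α β x - kawaharaSymbolDeriv α β (ξ - x)| := by
  have hN : 0 ≤ N := le_trans (by positivity) hx
  have hNx : N / 4 ≤ |x| := by linarith [abs_sub_abs_le_abs_sub ξ x]
  have hNx2 : (N / 4) ^ 2 ≤ x ^ 2 := sq_abs x ▸ pow_le_pow_left₀ (by positivity) hNx 2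
  have hNx4 : (N / 4) ^ 4 ≤ x ^ 4 := by nlinarith [pow_le_pow_left₀ (by positivity) hNx2 2]
  calc |β| * N ^ 4 / 256 = |β| * (N / 4) ^ 4 := by ring
    _ ≤ |β| * x ^ 4 := by gcongr
    _ ≤ _ := abs_mul_pow_four_le_abs_kawaharaSymbolDeriv_sub (by linarith)
        (by nlinarith [mul_le_mul_of_nonneg_left hNx2 (abs_nonneg β)])

def kawaharaResonantSet (α β ξ Nmin τ L : ℝ) : Set ℝ :=
  {x ∈ Icc (ξ - Nmin) (ξ + Nmin) | |kawaharaSymbol α β x + kawaharaSymbol α β (ξ - x) - τ| ≤ L}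

theorem volume_kawaharaResonantSet_le (hβ : β ≠ 0) {N Nmin ξ : ℝ} (hN : 0 < N)
    (hα : 16 * |α| ≤ |β| * N ^ 2) (hξ : N / 2 ≤ |ξ|) (hNmin : 8 * Nmin ≤ N) (τ L : ℝ) :
    volume (kawaharaResonantSet α β ξ Nmin τ L) ≤ ENNReal.ofReal (512 * L / (|β| * N ^ 4)) := by
  have hderiv : ∀ x ∈ Icc (ξ - Nmin) (ξ + Nmin), |β| * N ^ 4 / 256 ≤
      |kawaharaSymbolDeriv α β x - kawaharaSymbolDeriv α β (ξ - x)| := fun x hx =>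
    have hξx : |ξ - x| ≤ Nmin := abs_sub_le_iff.2 ⟨by linarith [hx.1], by linarith [hx.2]⟩
    abs_mul_pow_four_div_le_abs_kawaharaSymbolDeriv_sub hα hξ (by linarith)
  have hβ₀ : 0 < |β| := abs_pos.2 hβ
  calc volume (kawaharaResonantSet α β ξ Nmin τ L)
      ≤ ENNReal.ofReal (2 * L / (|β| * N ^ 4 / 256)) :=
        volume_setOf_abs_sub_le_le_of_le_abs_deriv ordConnected_Icc
          (fun x _ => hasDerivAt_kawaharaSymbol_add_sub ξ x) hderiv (by positivity) τ L
    _ = ENNReal.ofReal (512 * L / (|β| * N ^ 4)) := by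
        congr 1
        field_simp
        ring

end Kawahara

theorem kawahara_resonant_set_measure_separated (α β : ℝ) (hβ : β ≠ 0) :
    ∃ C > (0:ℝ), ∃ N₀ : ℝ, ∀ N Nmin : ℝ, N₀ ≤ N → 0 < Nmin → C * Nmin ≤ N →
      ∀ ξ : ℝ, N / 2 ≤ |ξ| → |ξ| ≤ 2 * N →
      ∀ τ L : ℝ, 0 < L →
        volume {ξ₂ : ℝ | N / 2 ≤ |ξ₂| ∧ |ξ₂| ≤ 2 * N ∧ |ξ - ξ₂| ≤ Nmin ∧
            |(-β * ξ₂^5 + α * ξ₂^3) + (-β * (ξ - ξ₂)^5 + α * (ξ - ξ₂)^3) - τ| ≤ L}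
          ≤ ENNReal.ofReal (C * L * (N^3)⁻¹ * Nmin⁻¹) := by
  have hβ₀ : 0 < |β| := abs_pos.2 hβ
  refine ⟨8 + 512 / |β|, by positivity, 16 * |α| / |β| + 1, ?_⟩
  intro N Nmin hN hNmin hCN ξ hξ _ τ L hL
  set C := 8 + 512 / |β| with hC
  have hN₁ : 1 ≤ N := by linarith [show 0 ≤ 16 * |α| / |β| by positivity]
  have hα : 16 * |α| ≤ |β| * N ^ 2 := by
    rw [← le_sub_iff_add_le, div_le_iff₀ hβ₀] at hN
    nlinarith [mul_le_mul_of_nonneg_right (show N ≤ N ^ 2 by nlinarith) hβ₀.le]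
  have hC₈ : 8 ≤ C := le_add_of_nonneg_right (by positivity)
  have hCβ : 512 ≤ C * |β| := by rw [hC, add_mul, div_mul_cancel₀ _ hβ₀.ne']; nlinarith
  have hNmin₅₁₂ : 512 * Nmin ≤ C * |β| * N := by
    nlinarith [mul_le_mul_of_nonneg_left hCN (by positivity : 0 ≤ C * |β|),
      mul_le_mul_of_nonneg_right hCβ (by positivity : 0 ≤ C * Nmin)]
  calc _ ≤ volume (kawaharaResonantSet α β ξ Nmin τ L) :=
        measure_mono <| by
          rintro x ⟨-, -, hx, hxL⟩
          exact ⟨by constructor <;> linarith [abs_sub_le_iff.1 hx], hxL⟩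
    _ ≤ ENNReal.ofReal (512 * L / (|β| * N ^ 4)) := volume_kawaharaResonantSet_le hβ
        (by positivity) hα hξ ((mul_le_mul_of_nonneg_right hC₈ hNmin.le).trans hCN) τ L
    _ ≤ _ := by
        refine ENNReal.ofReal_le_ofReal ?_
        rw [div_le_iff₀ (by positivity), show C * L * (N ^ 3)⁻¹ * Nmin⁻¹ * (|β| * N ^ 4)
          = L * (C * |β| * N) / Nmin by field_simp, le_div_iff₀ hNmin]
        nlinarith [mul_le_mul_of_nonneg_left hNmin₅₁₂ hL.le]
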